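/- For d > 0 let f(x; d) = x^{d/2−1} e^{−x/2} / (2^{d/2} Γ(d/2)) be the chi-squared density with d degrees of freedom on (0,∞), and for h ≥ 0 let f_h(x) = Σ_{j=0}^{∞} (e^{−h/2} (h/2)^j / j!) · f(x; d+2j) be the noncentral chi-squared density with d degrees of freedom and noncentrality parameter h. Then for all x > 0, f_h′(x)·f(x; d) − (∂f(x; d)/∂x)·f_h(x) = Σ_{j=0}^{∞} (e^{−h/2} (h/2)^j / j!)·f(x; d+2j)·f(x; d)·j·x^{−1} ≥ 0. -/
import Mathlib

noncomputable def chiSqPdf (d x : ℝ) : ℝ :=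
  x ^ (d / 2 - 1) * Real.exp (-x / 2) / (2 ^ (d / 2) * Real.Gamma (d / 2))

lemma chiSq_shift (d : ℝ) (hd : 0 < d) (j : ℕ) (y : ℝ) (hy : 0 < y) :
    chiSqPdf (d + 2 * j) y =
      (Real.Gamma (d / 2) / (2 ^ j * Real.Gamma (d / 2 + j))) * y ^ j * chiSqPdf d y := by
  have hΓ : 0 < Real.Gamma (d / 2) := Real.Gamma_pos_of_pos (by positivity)
  have hΓj : 0 < Real.Gamma (d / 2 + j) := Real.Gamma_pos_of_pos (by positivity)
  have e1 : (d + 2 * (j : ℝ)) / 2 = d / 2 + j := by ring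
  have e2 : y ^ (d / 2 + (j : ℝ) - 1) = y ^ (d / 2 - 1) * y ^ j := by
    rw [show d / 2 + (j : ℝ) - 1 = (d / 2 - 1) + (j : ℝ) by ring, Real.rpow_add hy,
      Real.rpow_natCast]
  have e3 : (2 : ℝ) ^ (d / 2 + (j : ℝ)) = 2 ^ (d / 2) * 2 ^ j := by
    rw [Real.rpow_add (by norm_num : (0:ℝ) < 2), Real.rpow_natCast]
  simp only [chiSqPdf, e1, e2, e3]
  have h2 : (0:ℝ) < (2:ℝ) ^ (d / 2) := Real.rpow_pos_of_pos (by norm_num) _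
  field_simp

lemma chiSqPdf_diffAt (d x : ℝ) (hx : 0 < x) :
    DifferentiableAt ℝ (fun y => chiSqPdf d y) x := by
  have h1 : DifferentiableAt ℝ (fun y : ℝ => y ^ (d / 2 - 1)) x :=
    Real.differentiableAt_rpow_const_of_ne _ hx.ne'
  have h2 : DifferentiableAt ℝ (fun y : ℝ => Real.exp (-y / 2)) x := by
    fun_prop
  exact (h1.mul h2).div_const _

/-- for the noncentral chi-squared density
f_h(x) = Σ_{j=0}^∞ (e^{−h/2}(h/2)^j / j!)·f(x; d+2j) with d > 0 and h ≥ 0, for all x > 0,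
f_h′(x)·f(x; d) − (∂f(x; d)/∂x)·f_h(x)
  = Σ_{j=0}^∞ (e^{−h/2}(h/2)^j / j!)·f(x; d+2j)·f(x; d)·j·x^{−1} ≥ 0. -/
theorem stmt_4 (d : ℝ) (hd : 0 < d) (h : ℝ) (hh : 0 ≤ h)
    (fh : ℝ → ℝ)
    (hfh : ∀ x : ℝ, fh x =
      ∑' j : ℕ, (Real.exp (-h / 2) * (h / 2) ^ j / (Nat.factorial j : ℝ)) *
        chiSqPdf (d + 2 * j) x) :
    ∀ x : ℝ, 0 < x →
      (deriv fh x * chiSqPdf d x - deriv (fun y => chiSqPdf d y) x * fh x =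
        ∑' j : ℕ, (Real.exp (-h / 2) * (h / 2) ^ j / (Nat.factorial j : ℝ)) *
          chiSqPdf (d + 2 * j) x * chiSqPdf d x * (j : ℝ) * x⁻¹) ∧
      0 ≤ deriv fh x * chiSqPdf d x - deriv (fun y => chiSqPdf d y) x * fh x := by
  intro x hx
  set c : ℕ → ℝ := fun j => Real.exp (-h / 2) * (h / 2) ^ j / (Nat.factorial j : ℝ) with hc
  set a : ℕ → ℝ := fun j => c j * (Real.Gamma (d / 2) / (2 ^ j * Real.Gamma (d / 2 + j)))
    with ha
  have hΓ : ∀ j : ℕ, 0 < Real.Gamma (d / 2 + j) :=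
    fun j => Real.Gamma_pos_of_pos (by positivity)
  have hΓ0 : 0 < Real.Gamma (d / 2) := Real.Gamma_pos_of_pos (by positivity)
  have ha_nonneg : ∀ j, 0 ≤ a j := by
    intro j
    have := (hΓ j).le
    have : (0:ℝ) ≤ c j := by positivity
    have := (hΓ j)
    positivity
  -- recurrence for a
  have hrec : ∀ n : ℕ, a (n + 1) = a n * ((h / 4) / ((n + 1) * (d / 2 + n))) := by
    intro n
    have hne : d / 2 + (n : ℝ) ≠ 0 := by positivity
    have hΓs : Real.Gamma (d / 2 + (n + 1 : ℕ)) = (d / 2 + n) * Real.Gamma (d / 2 + n) := by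
      rw [show d / 2 + ((n + 1 : ℕ) : ℝ) = (d / 2 + n) + 1 by push_cast; ring,
        Real.Gamma_add_one hne]
    simp only [ha, hc, hΓs, Nat.factorial_succ]
    have h1 : ((n:ℝ) + 1) ≠ 0 := by positivity
    have h2 : (Nat.factorial n : ℝ) ≠ 0 := by positivity
    have h3 : Real.Gamma (d / 2 + n) ≠ 0 := (hΓ n).ne'
    have h4 : (2:ℝ) ^ n ≠ 0 := by positivity
    push_cast
    field_simp
    ring
  -- summable majorant v
  set v : ℕ → ℝ := fun n => a n * (n + 1) * (x + 1) ^ n with hv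
  have hv_nonneg : ∀ n, 0 ≤ v n := by
    intro n
    have := ha_nonneg n
    have : (0:ℝ) ≤ (x + 1) ^ n := by positivity
    exact mul_nonneg (mul_nonneg (ha_nonneg n) (by positivity)) this
  have hvsum : Summable v := by
    apply summable_of_ratio_norm_eventually_le (r := 1/2) (by norm_num)
    filter_upwards [Filter.eventually_ge_atTop (max 1 ⌈h * (x + 1)⌉₊)] with n hn
    have hn1 : 1 ≤ n := le_trans (le_max_left _ _) hn
    have hn2 : h * (x + 1) ≤ n := by
      calc h * (x + 1) ≤ (⌈h * (x + 1)⌉₊ : ℝ) := Nat.le_ceil _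
        _ ≤ n := by exact_mod_cast le_trans (le_max_right _ _) hn
    have hn1' : (1:ℝ) ≤ n := by exact_mod_cast hn1
    rw [Real.norm_of_nonneg (hv_nonneg _), Real.norm_of_nonneg (hv_nonneg _)]
    have key : v (n + 1) = (a n * (x + 1) ^ n) *
        (((h / 4) / ((n + 1) * (d / 2 + n))) * (n + 2) * (x + 1)) := by
      simp only [hv, hrec n, pow_succ]
      push_cast
      ring
    have key2 : v n = (a n * (x + 1) ^ n) * (n + 1) := by simp only [hv]; ring
    rw [key, key2]
    rw [show (1:ℝ)/2 * (a n * (x + 1) ^ n * (n + 1)) =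
        (a n * (x + 1) ^ n) * ((n + 1) / 2) by ring]
    apply mul_le_mul_of_nonneg_left _ (by positivity)
    rw [div_mul_eq_mul_div, div_mul_eq_mul_div, div_le_div_iff₀ (by positivity) (by norm_num)]
    have h0 : 0 ≤ h * (x + 1) := mul_nonneg hh (by positivity)
    have h1 : h * (x + 1) * ((n:ℝ) + 2) ≤ (n:ℝ) * ((n:ℝ) + 2) :=
      mul_le_mul_of_nonneg_right hn2 (by linarith)
    nlinarith [sq_nonneg ((n:ℝ) - 1), sq_nonneg (n:ℝ),
      mul_nonneg (mul_nonneg hd.le (by linarith : (0:ℝ) ≤ (n:ℝ))) (by linarith : (0:ℝ) ≤ (n:ℝ)),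
      mul_nonneg hd.le (by linarith : (0:ℝ) ≤ (n:ℝ))]
  -- derivative of the power series g
  have hx1 : (1:ℝ) ≤ x + 1 := by linarith
  have hmem : x ∈ Set.Ioo (0:ℝ) (x + 1) := ⟨hx, by linarith⟩
  have hbound : ∀ n : ℕ, ∀ y : ℝ, y ∈ Set.Ioo (0:ℝ) (x + 1) →
      ‖a n * ((n : ℝ) * y ^ (n - 1))‖ ≤ v n := by
    intro n y hy
    have h0 : (0:ℝ) ≤ a n * ((n : ℝ) * y ^ (n - 1)) :=
      mul_nonneg (ha_nonneg n) (mul_nonneg (Nat.cast_nonneg n) (pow_nonneg hy.1.le _))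
    rw [Real.norm_of_nonneg h0]
    have hyx : y ^ (n - 1) ≤ (x + 1) ^ n := by
      calc y ^ (n - 1) ≤ (x + 1) ^ (n - 1) := pow_le_pow_left₀ hy.1.le hy.2.le _
        _ ≤ (x + 1) ^ n := pow_le_pow_right₀ hx1 (Nat.sub_le n 1)
    calc a n * ((n : ℝ) * y ^ (n - 1)) ≤ a n * (((n : ℝ) + 1) * (x + 1) ^ n) := by
          apply mul_le_mul_of_nonneg_left _ (ha_nonneg n)
          apply mul_le_mul (by linarith) hyx (pow_nonneg hy.1.le _) (by positivity)
      _ = v n := by simp only [hv]; ring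
  have hsum0 : Summable (fun n => a n * x ^ n) := by
    apply hvsum.of_nonneg_of_le (fun n => by
      exact mul_nonneg (ha_nonneg n) (pow_nonneg hx.le _))
    intro n
    calc a n * x ^ n ≤ a n * (((n:ℝ) + 1) * (x + 1) ^ n) := by
          apply mul_le_mul_of_nonneg_left _ (ha_nonneg n)
          calc x ^ n ≤ (x + 1) ^ n := pow_le_pow_left₀ hx.le (by linarith) _
            _ ≤ ((n:ℝ) + 1) * (x + 1) ^ n := by
                have hn0 : (0:ℝ) ≤ (n:ℝ) := Nat.cast_nonneg n
                exact le_mul_of_one_le_left (by positivity) (by linarith)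
      _ = v n := by simp only [hv]; ring
  have key : HasDerivAt (fun z : ℝ => ∑' n : ℕ, a n * z ^ n)
      (∑' n : ℕ, a n * ((n : ℝ) * x ^ (n - 1))) x :=
    hasDerivAt_tsum_of_isPreconnected hvsum isOpen_Ioo (convex_Ioo 0 (x+1)).isPreconnected
      (fun n y _ => (hasDerivAt_pow n y).const_mul (a n)) hbound hmem hsum0 hmem
  have hev : fh =ᶠ[nhds x] fun y => chiSqPdf d y * ∑' n : ℕ, a n * y ^ n := by
    filter_upwards [Ioi_mem_nhds hx] with y hy
    rw [hfh y]
    calc ∑' j : ℕ, c j * chiSqPdf (d + 2 * j) y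
        = ∑' j : ℕ, chiSqPdf d y * (a j * y ^ j) := by
          refine tsum_congr fun j => ?_
          rw [chiSq_shift d hd j y hy]
          simp only [ha]
          ring
      _ = chiSqPdf d y * ∑' j : ℕ, a j * y ^ j := tsum_mul_left
  have hPd : HasDerivAt (fun y => chiSqPdf d y) (deriv (fun y => chiSqPdf d y) x) x :=
    (chiSqPdf_diffAt d x hx).hasDerivAt
  have hfh_deriv : HasDerivAt fh
      (deriv (fun y => chiSqPdf d y) x * (∑' n : ℕ, a n * x ^ n) +
        chiSqPdf d x * ∑' n : ℕ, a n * ((n : ℝ) * x ^ (n - 1))) x :=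
    (hPd.mul key).congr_of_eventuallyEq hev
  have hfx : fh x = chiSqPdf d x * ∑' n : ℕ, a n * x ^ n := hev.self_of_nhds
  have hRHS : (∑' j : ℕ, c j * chiSqPdf (d + 2 * j) x * chiSqPdf d x * (j : ℝ) * x⁻¹)
      = chiSqPdf d x ^ 2 * ∑' n : ℕ, a n * ((n : ℝ) * x ^ (n - 1)) := by
    calc (∑' j : ℕ, c j * chiSqPdf (d + 2 * j) x * chiSqPdf d x * (j : ℝ) * x⁻¹)
        = ∑' j : ℕ, chiSqPdf d x ^ 2 * (a j * ((j : ℝ) * x ^ (j - 1))) := by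
          refine tsum_congr fun j => ?_
          rw [chiSq_shift d hd j x hx]
          cases j with
          | zero => simp
          | succ k =>
            simp only [ha, Nat.succ_sub_one]
            push_cast
            field_simp
            ring
      _ = chiSqPdf d x ^ 2 * ∑' j : ℕ, a j * ((j : ℝ) * x ^ (j - 1)) := tsum_mul_left
  have hg'_nonneg : 0 ≤ ∑' n : ℕ, a n * ((n : ℝ) * x ^ (n - 1)) :=
    tsum_nonneg fun n =>
      mul_nonneg (ha_nonneg n) (mul_nonneg (Nat.cast_nonneg n) (pow_nonneg hx.le _))
  have hmain : deriv fh x * chiSqPdf d x - deriv (fun y => chiSqPdf d y) x * fh x =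
      chiSqPdf d x ^ 2 * ∑' n : ℕ, a n * ((n : ℝ) * x ^ (n - 1)) := by
    rw [hfh_deriv.deriv, hfx]
    ring
  refine ⟨?_, ?_⟩
  · rw [hmain, hRHS]
  · rw [hmain]
    exact mul_nonneg (sq_nonneg _) hg'_nonneg
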